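/- arXiv:2505.04870 — 2 statements merged into one kernel-verified Lean document; each statement's English description precedes it below -/
import Mathlib

section
/- Let F : ℕ+ → ℕ+ ∪ {ℵ₀} with {(m,n) : F(m) ≥ n} decidable. Let φ = φ₁ ∧ φ₂ be a conjunction of literals in the signature of nullary predicates P₁, P₂, ..., with φ₁ the (dis)equalities and φ₂ the predicate literals, and suppose φ₁ is satisfiable in equational logic with smallest model size m. Then φ is satisfiable in the theory T_≤ (axiomatized by {Pₙ → |domain| ≤ F(n) : F(n) finite}) if and only if φ₂ contains no complementary pair Pₙ, ¬Pₙ and F(n) ≥ m for every n with Pₙ occurring positively in φ₂. Consequently T_≤ is decidable. -/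
/-- Satisfaction of a conjunction `φ₁` of equality/disequality literals between variables
(encoded as triples `(i, j, b)`, `b = true` meaning `xᵢ = xⱼ`) under an assignment `σ`. -/
def EqSat (φ1 : List (ℕ × ℕ × Bool)) {M : Type} (σ : ℕ → M) : Prop :=
  ∀ l ∈ φ1, if l.2.2 then σ l.1 = σ l.2.1 else σ l.1 ≠ σ l.2.1

/-- `(M, P)` is a model of `T_≤`, axiomatized by
`{Pₙ → |domain| ≤ F(n) : n ∈ ℕ+, F(n) finite}`. -/
def TleModel (F : ℕ+ → ℕ∞) (M : Type) (P : ℕ+ → Prop) : Prop :=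
  ∀ n : ℕ+, ∀ k : ℕ, F n = (k : ℕ∞) → P n → Cardinal.mk M ≤ (k : Cardinal)

/-- `T_≤`-satisfiability of the conjunction of literals `φ₁ ∧ φ₂`, where `φ₂` consists of
the literals `Pₙ` for `n ∈ Pos` and `¬Pₙ` for `n ∈ Neg`. -/
def SatTle (F : ℕ+ → ℕ∞) (φ1 : List (ℕ × ℕ × Bool)) (Pos Neg : List ℕ+) : Prop :=
  ∃ (M : Type) (P : ℕ+ → Prop) (σ : ℕ → M),
    Nonempty M ∧ TleModel F M P ∧ EqSat φ1 σ ∧ (∀ n ∈ Pos, P n) ∧ (∀ n ∈ Neg, ¬ P n)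


/-- variables occurring in φ₁ -/
def varsL (φ1 : List (ℕ × ℕ × Bool)) : List ℕ := φ1.flatMap (fun l => [l.1, l.2.1])

/-- strict upper bound for variables of φ₁ (positive) -/
def WW (φ1 : List (ℕ × ℕ × Bool)) : ℕ := (varsL φ1).foldr max 0 + 1

/-- all lists of length L with entries < B -/
def tuples (B : ℕ) : ℕ → List (List ℕ)
  | 0 => [[]]
  | L + 1 => (tuples B L).flatMap (fun t => (List.range B).map (fun v => v :: t))

/-- boolean check that a tuple satisfies φ₁ -/
def checkEq (φ1 : List (ℕ × ℕ × Bool)) (t : List ℕ) : Bool :=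
  φ1.all (fun l => ((t.getD l.1 0 == t.getD l.2.1 0) == l.2.2))

/-- index of first `false`, or length if none -/
def firstFalse : List Bool → ℕ
  | [] => 0
  | b :: r => bif b then firstFalse r + 1 else 0

/-- the decision function, given caps (one per positive literal) -/
def GG (q : (List (ℕ × ℕ × Bool) × List ℕ × List ℕ) × List ℕ) : Bool :=
  (q.1.2.1.all fun n => !(q.1.2.2.any fun m => m == n)) &&
  (decide (0 < q.2.foldr min (WW q.1.1)) &&
   ((tuples (q.2.foldr min (WW q.1.1)) (WW q.1.1)).any fun t => checkEq q.1.1 t))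

theorem mem_tuples {B L : ℕ} {t : List ℕ} :
    t ∈ tuples B L ↔ t.length = L ∧ ∀ x ∈ t, x < B := by
  induction L generalizing t with
  | zero =>
    simp only [tuples, List.mem_singleton, List.length_eq_zero_iff]
    constructor
    · rintro rfl; simp
    · rintro ⟨rfl, -⟩; rfl
  | succ L ih =>
    simp only [tuples, List.mem_flatMap, List.mem_map, List.mem_range]
    constructor
    · rintro ⟨t', ht', v, hv, rfl⟩
      obtain ⟨hlen, hmem⟩ := ih.1 ht'
      refine ⟨by simp [hlen], ?_⟩
      intro x hx
      rcases List.mem_cons.1 hx with rfl | hx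
      · exact hv
      · exact hmem x hx
    · rintro ⟨hlen, hmem⟩
      cases t with
      | nil => simp at hlen
      | cons v t' =>
        refine ⟨t', ih.2 ⟨by simpa using hlen, fun x hx => hmem x (List.mem_cons_of_mem _ hx)⟩,
          v, hmem v List.mem_cons_self, rfl⟩

theorem le_foldr_max (l : List ℕ) (a : ℕ) : ∀ x ∈ l, x ≤ l.foldr max a := by
  induction l with
  | nil => simp
  | cons b l ih =>
    intro x hx
    rcases List.mem_cons.1 hx with rfl | hx
    · exact le_max_left _ _
    · exact le_trans (ih x hx) (le_max_right _ _)

theorem vars_lt_WW {φ1 : List (ℕ × ℕ × Bool)} {l : ℕ × ℕ × Bool} (hl : l ∈ φ1) :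
    l.1 < WW φ1 ∧ l.2.1 < WW φ1 := by
  have h1 : l.1 ∈ varsL φ1 := by
    simp only [varsL, List.mem_flatMap]; exact ⟨l, hl, by simp⟩
  have h2 : l.2.1 ∈ varsL φ1 := by
    simp only [varsL, List.mem_flatMap]; exact ⟨l, hl, by simp⟩
  exact ⟨Nat.lt_succ_of_le (le_foldr_max _ _ _ h1), Nat.lt_succ_of_le (le_foldr_max _ _ _ h2)⟩

theorem foldr_min_le_init (l : List ℕ) (a : ℕ) : l.foldr min a ≤ a := by
  induction l with
  | nil => simp
  | cons b l ih => exact le_trans (min_le_right _ _) ih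

theorem foldr_min_le_mem (l : List ℕ) (a : ℕ) : ∀ x ∈ l, l.foldr min a ≤ x := by
  induction l with
  | nil => simp
  | cons b l ih =>
    intro x hx
    rcases List.mem_cons.1 hx with rfl | hx
    · exact min_le_left _ _
    · exact le_trans (min_le_right _ _) (ih x hx)

theorem le_foldr_min (l : List ℕ) (a : ℕ) (s : ℕ) (ha : s ≤ a) (h : ∀ x ∈ l, s ≤ x) :
    s ≤ l.foldr min a := by
  induction l with
  | nil => simpa
  | cons b l ih =>
    exact le_min (h b List.mem_cons_self) (ih fun x hx => h x (List.mem_cons_of_mem _ hx))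

theorem firstFalse_le_length (l : List Bool) : firstFalse l ≤ l.length := by
  induction l with
  | nil => simp [firstFalse]
  | cons b l ih => cases b <;> simp [firstFalse, Nat.succ_le_succ ih]

theorem firstFalse_eq_length (l : List Bool) (h : ∀ b ∈ l, b = true) :
    firstFalse l = l.length := by
  induction l with
  | nil => simp [firstFalse]
  | cons b l ih =>
    have hb := h b List.mem_cons_self
    subst hb
    simp [firstFalse, ih fun x hx => h x (List.mem_cons_of_mem _ hx)]

theorem firstFalse_spec (l : List Bool) (h : firstFalse l < l.length) :
    l.getD (firstFalse l) true = false ∧ ∀ i < firstFalse l, l.getD i true = true := by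
  induction l with
  | nil => simp at h
  | cons b l ih =>
    cases b with
    | false => simp [firstFalse]
    | true =>
      simp only [firstFalse, cond_true] at h ⊢
      have h' : firstFalse l < l.length := by simpa using h
      obtain ⟨h1, h2⟩ := ih h'
      refine ⟨h1, ?_⟩
      intro i hi
      cases i with
      | zero => simp
      | succ i => exact h2 i (by omega)


theorem firstFalse_lt_length (l : List Bool) (h : ∃ b ∈ l, b = false) :
    firstFalse l < l.length := by
  induction l with
  | nil => simp at h
  | cons b l ih =>
    cases b with
    | false => simp [firstFalse]
    | true =>
      obtain ⟨x, hx, hxf⟩ := h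
      rcases List.mem_cons.1 hx with rfl | hx
      · simp at hxf
      · simpa [firstFalse] using ih ⟨x, hx, hxf⟩

theorem cap_spec (a : ℕ∞) (g : ℕ → Bool) (hg : ∀ k, g k = true ↔ ((k + 1 : ℕ) : ℕ∞) ≤ a)
    (W : ℕ) (hW : 0 < W) :
    ((firstFalse ((List.range W).map g) : ℕ) : ℕ∞) = min a (W : ℕ∞) := by
  set row := (List.range W).map g with hrow
  have hlen : row.length = W := by simp [hrow]
  have hget : ∀ i (h : i < W), row.getD i true = g i := by
    intro i h
    rw [List.getD_eq_getElem _ _ (by omega)]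
    simp [hrow]
  rcases lt_or_eq_of_le (firstFalse_le_length row) with hlt | heqW
  · -- firstFalse < W : a = firstFalse
    obtain ⟨h1, h2⟩ := firstFalse_spec row hlt
    set j := firstFalse row with hj
    rw [hlen] at hlt
    have hfj : g j = false := by rw [← hget j hlt]; exact h1
    have haj : a ≤ (j : ℕ∞) := by
      by_contra hcon
      push_neg at hcon
      have : ((j + 1 : ℕ) : ℕ∞) ≤ a := by
        have := Order.add_one_le_of_lt hcon
        simpa using this
      rw [← hg j] at this
      simp [hfj] at this
    have hja : (j : ℕ∞) ≤ a := by
      rcases Nat.eq_zero_or_pos j with hj0 | hj0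
      · simp [hj0]
      · have hi : g (j - 1) = true := by
          rw [← hget (j - 1) (by omega)]
          exact h2 (j - 1) (by omega)
        rw [hg (j - 1)] at hi
        rwa [Nat.sub_add_cancel hj0] at hi
    have : a = (j : ℕ∞) := le_antisymm haj hja
    rw [this, min_eq_left]
    exact_mod_cast le_of_lt hlt
  · -- firstFalse = W : W ≤ a
    rw [heqW, hlen]
    have hall : ∀ k < W, g k = true := by
      intro k hk
      by_contra hcon
      have : firstFalse row < row.length :=
        firstFalse_lt_length row ⟨g k, by simp [hrow]; exact ⟨k, hk, rfl⟩,
          by simpa using hcon⟩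
      omega
    have hWa : (W : ℕ∞) ≤ a := by
      have := (hg (W - 1)).1 (hall (W - 1) (by omega))
      have heq : W - 1 + 1 = W := by omega
      rwa [heq] at this
    rw [min_eq_right hWa]


theorem checkEq_iff {φ1 : List (ℕ × ℕ × Bool)} {t : List ℕ} :
    checkEq φ1 t = true ↔
      ∀ l ∈ φ1, if l.2.2 then t.getD l.1 0 = t.getD l.2.1 0
        else t.getD l.1 0 ≠ t.getD l.2.1 0 := by
  simp only [checkEq, List.all_eq_true]
  apply forall_congr'
  intro l
  apply imp_congr Iff.rfl
  cases hb : l.2.2 <;> simp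


theorem GG_eq (φ1 : List (ℕ × ℕ × Bool)) (Pos Neg : List ℕ) (caps : List ℕ) :
    GG ((φ1, Pos, Neg), caps) = true ↔
      (∀ n ∈ Pos, n ∉ Neg) ∧ 0 < caps.foldr min (WW φ1) ∧
        ∃ t ∈ tuples (caps.foldr min (WW φ1)) (WW φ1), checkEq φ1 t = true := by
  simp only [GG, Bool.and_eq_true, List.all_eq_true, List.any_eq_true,
    decide_eq_true_eq, Bool.not_eq_true', List.any_eq_false, beq_iff_eq]
  constructor
  · rintro ⟨h1, h2, h3⟩
    exact ⟨fun n hn hmem => h1 n hn n hmem rfl, h2, h3⟩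
  · rintro ⟨h1, h2, h3⟩
    exact ⟨fun n hn m hm hmn => h1 n hn (hmn ▸ hm), h2, h3⟩

theorem GG_iff (F : ℕ+ → ℕ∞) (φ1 : List (ℕ × ℕ × Bool)) (Pos Neg : List ℕ) (c : ℕ → ℕ)
    (hc : ∀ n ∈ Pos, ((c n : ℕ) : ℕ∞) = min (F n.succPNat) ((WW φ1 : ℕ) : ℕ∞)) :
    GG ((φ1, Pos, Neg), Pos.map c) = true ↔
      SatTle F φ1 (Pos.map Nat.succPNat) (Neg.map Nat.succPNat) := by
  set W := WW φ1 with hWdef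
  have hW : 0 < W := Nat.succ_pos _
  set B := (Pos.map c).foldr min W with hBdef
  constructor
  · -- GG true → SatTle
    intro hGG
    obtain ⟨hdisj, hB, t, ht, hchk⟩ := (GG_eq φ1 Pos Neg (Pos.map c)).1 hGG
    obtain ⟨hlen, hentry⟩ := mem_tuples.1 ht
    have hgetlt : ∀ i : ℕ, t.getD i 0 < B := by
      intro i
      rcases lt_or_ge i t.length with h | h
      · rw [List.getD_eq_getElem _ _ h]
        exact hentry _ (List.getElem_mem h)
      · rw [List.getD_eq_default _ _ h]
        exact hB
    refine ⟨Fin B, fun n => n ∈ Pos.map Nat.succPNat, fun i => ⟨t.getD i 0, hgetlt i⟩,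
      ⟨⟨0, hB⟩⟩, ?_, ?_, ?_, ?_⟩
    · -- TleModel
      intro n k hFk hPn
      simp only [List.mem_map] at hPn
      obtain ⟨m, hm, rfl⟩ := hPn
      have hcm : B ≤ c m :=
        foldr_min_le_mem _ _ _ (List.mem_map.2 ⟨m, hm, rfl⟩)
      have h1 : ((c m : ℕ) : ℕ∞) ≤ (k : ℕ∞) := by
        rw [hc m hm, hFk]; exact min_le_left _ _
      have h2 : c m ≤ k := by exact_mod_cast h1
      rw [Cardinal.mk_fin]
      exact_mod_cast le_trans hcm h2
    · -- EqSat
      intro l hl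
      have hck := checkEq_iff.1 hchk l hl
      by_cases hb : l.2.2 = true
      · rw [if_pos hb] at hck ⊢
        exact Fin.ext hck
      · rw [if_neg hb] at hck ⊢
        intro hcon
        exact hck (by simpa [Fin.ext_iff] using hcon)
    · intro n hn; exact hn
    · intro n hn hPn
      simp only [List.mem_map] at hn hPn
      obtain ⟨m, hm, rfl⟩ := hn
      obtain ⟨m', hm', hmm⟩ := hPn
      have hmmeq : m' = m := by
        have := congrArg (fun x : ℕ+ => (x : ℕ)) hmm
        simpa [Nat.succPNat] using this
      subst hmmeq
      exact hdisj m' hm' hm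
  · -- SatTle → GG true
    rintro ⟨M, P, σ, hne, hmod, heq, hpos, hneg⟩
    haveI := hne
    classical
    set S : Finset M := Finset.image (fun i : Fin W => σ i) Finset.univ with hSdef
    have hScard : S.card ≤ W := le_trans Finset.card_image_le (by simp)
    have hSF : ∀ n ∈ Pos, ((S.card : ℕ) : ℕ∞) ≤ F n.succPNat := by
      intro n hn
      cases hF : F n.succPNat with
      | top => exact le_top
      | coe k =>
        have hMk : Cardinal.mk M ≤ (k : Cardinal) :=
          hmod n.succPNat k hF (hpos _ (List.mem_map.2 ⟨n, hn, rfl⟩))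
        have h1 : ((S.card : ℕ) : Cardinal) ≤ Cardinal.mk M := by
          rw [← Cardinal.mk_coe_finset]
          exact Cardinal.mk_subtype_le _
        have h2 : S.card ≤ k := by exact_mod_cast le_trans h1 hMk
        exact_mod_cast h2
    have hone : ∀ n ∈ Pos, (1 : ℕ∞) ≤ F n.succPNat := by
      intro n hn
      cases hF : F n.succPNat with
      | top => exact le_top
      | coe k =>
        have hMk : Cardinal.mk M ≤ (k : Cardinal) :=
          hmod n.succPNat k hF (hpos _ (List.mem_map.2 ⟨n, hn, rfl⟩))
        have h1 : (1 : Cardinal) ≤ Cardinal.mk M :=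
          Cardinal.one_le_iff_ne_zero.2 (Cardinal.mk_ne_zero M)
        have : (1 : ℕ) ≤ k := by exact_mod_cast le_trans h1 hMk
        exact_mod_cast this
    have hSB : S.card ≤ B := by
      apply le_foldr_min _ _ _ hScard
      intro x hx
      obtain ⟨n, hn, rfl⟩ := List.mem_map.1 hx
      have : ((S.card : ℕ) : ℕ∞) ≤ ((c n : ℕ) : ℕ∞) := by
        rw [hc n hn]
        exact le_min (hSF n hn) (by exact_mod_cast hScard)
      exact_mod_cast this
    have hBpos : 0 < B := by
      have : 1 ≤ B := by
        apply le_foldr_min _ _ _ hW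
        intro x hx
        obtain ⟨n, hn, rfl⟩ := List.mem_map.1 hx
        have : ((1 : ℕ) : ℕ∞) ≤ ((c n : ℕ) : ℕ∞) := by
          rw [hc n hn]
          exact le_min (by exact_mod_cast hone n hn) (by exact_mod_cast hW)
        exact_mod_cast this
      omega
    -- embedding
    have hcard : Fintype.card S ≤ Fintype.card (Fin B) := by
      simpa using hSB
    obtain ⟨e⟩ := Function.Embedding.nonempty_iff_card_le.2 hcard
    have hmemS : ∀ i : Fin W, σ i ∈ S := fun i =>
      Finset.mem_image_of_mem _ (Finset.mem_univ i)
    set t : List ℕ := List.ofFn (fun i : Fin W => (e ⟨σ i, hmemS i⟩ : Fin B).val) with htdef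
    have htlen : t.length = W := by rw [htdef, List.length_ofFn]
    have htmem : t ∈ tuples B W := by
      refine mem_tuples.2 ⟨htlen, ?_⟩
      intro x hx
      obtain ⟨i, hi⟩ := List.mem_ofFn.1 hx
      rw [← hi]
      exact Fin.is_lt _
    have hgetval : ∀ v (h : v < W), t.getD v 0 = (e ⟨σ v, hmemS ⟨v, h⟩⟩ : Fin B).val := by
      intro v h
      rw [List.getD_eq_getElem _ _ (by omega)]
      simp only [htdef, List.getElem_ofFn]
    have hchk : checkEq φ1 t = true := by
      apply checkEq_iff.2
      intro l hl
      obtain ⟨h1, h2⟩ := vars_lt_WW hl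
      rw [hgetval _ h1, hgetval _ h2]
      have heql := heq l hl
      have hiff : ((e ⟨σ l.1, hmemS ⟨l.1, h1⟩⟩ : Fin B).val =
          (e ⟨σ l.2.1, hmemS ⟨l.2.1, h2⟩⟩ : Fin B).val) ↔ σ l.1 = σ l.2.1 := by
        constructor
        · intro h
          have := e.injective (Fin.ext h)
          simpa [Subtype.ext_iff] using this
        · intro h
          exact congrArg (fun s => (e s : Fin B).val) (Subtype.ext h)
      by_cases hb : l.2.2 = true
      · rw [if_pos hb] at heql ⊢
        exact hiff.2 heql
      · rw [if_neg hb] at heql ⊢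
        exact fun hcon => heql (hiff.1 hcon)
    -- assemble GG
    refine (GG_eq φ1 Pos Neg (Pos.map c)).2 ⟨?_, hBpos, t, htmem, hchk⟩
    intro n hn hmem
    exact hneg _ (List.mem_map.2 ⟨n, hmem, rfl⟩) (hpos _ (List.mem_map.2 ⟨n, hn, rfl⟩))


section CompAux

variable {α : Type*} {β : Type*} {σ : Type*}
variable [Primcodable α] [Primcodable β] [Primcodable σ]

theorem myComputable_list_map {f : α → List β} {g : α → β → σ} (hf : Computable f)
    (hg : Computable₂ g) : Computable fun a => (f a).map (g a) := by
  have ho : Computable fun x : α × (ℕ × List σ) => (f x.1)[x.2.1]? :=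
    Computable.list_getElem?.comp (hf.comp Computable.fst) (Computable.fst.comp Computable.snd)
  have hF : Computable fun x : α × (ℕ × List σ) => x.2.2 :=
    Computable.snd.comp Computable.snd
  have hG : Computable₂ fun (x : α × (ℕ × List σ)) (b : β) => x.2.2 ++ [g x.1 b] :=
    Computable.to₂ (Computable.list_concat.comp
      (Computable.snd.comp (Computable.snd.comp Computable.fst))
      (hg.comp (Computable.fst.comp Computable.fst) Computable.snd))
  have step : Computable fun x : α × (ℕ × List σ) =>
      (Option.casesOn ((f x.1)[x.2.1]?) x.2.2 (fun b => x.2.2 ++ [g x.1 b]) : List σ) :=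
    Computable.option_casesOn ho hF hG
  have main := Computable.nat_rec (Computable.list_length.comp hf)
    (Computable.const ([] : List σ)) (Computable.to₂ step)
  apply main.of_eq
  intro a
  have key : ∀ n : ℕ, (Nat.rec ([] : List σ)
      (fun y IH => (Option.casesOn ((f a)[y]?) IH (fun b => IH ++ [g a b]) : List σ)) n :
        List σ) = ((f a).take n).map (g a) := by
    intro n
    induction n with
    | zero => simp
    | succ n ih =>
      simp only [List.take_succ]
      show (Option.casesOn ((f a)[n]?) _ _ : List σ) = _
      rw [ih]
      cases h : (f a)[n]? <;> simp [h]
  simp only [key ((f a).length), List.take_length]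

theorem myPrimrec_list_all {f : α → List β} {p : α → β → Bool} (hf : Primrec f)
    (hp : Primrec₂ p) : Primrec fun a => (f a).all (p a) := by
  have H : Primrec fun x : α × (β × Bool) => p x.1 x.2.1 && x.2.2 :=
    (Primrec.dom_bool₂ (· && ·)).comp
      (hp.comp Primrec.fst (Primrec.fst.comp Primrec.snd))
      (Primrec.snd.comp Primrec.snd)
  have main := Primrec.list_foldr hf (Primrec.const true) (Primrec.to₂ H)
  apply main.of_eq
  intro a
  induction f a with
  | nil => simp
  | cons b l ih => simp [ih]

theorem myPrimrec_list_any {f : α → List β} {p : α → β → Bool} (hf : Primrec f)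
    (hp : Primrec₂ p) : Primrec fun a => (f a).any (p a) := by
  have H : Primrec fun x : α × (β × Bool) => p x.1 x.2.1 || x.2.2 :=
    (Primrec.dom_bool₂ (· || ·)).comp
      (hp.comp Primrec.fst (Primrec.fst.comp Primrec.snd))
      (Primrec.snd.comp Primrec.snd)
  have main := Primrec.list_foldr hf (Primrec.const false) (Primrec.to₂ H)
  apply main.of_eq
  intro a
  induction f a with
  | nil => simp
  | cons b l ih => simp [ih]

theorem myPrimrec_nat_beq : Primrec₂ (fun a b : ℕ => a == b) := by
  have : Primrec₂ (fun a b : ℕ => decide (a = b)) := Primrec.eq.decide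
  apply this.of_eq
  intro a b
  by_cases h : a = b <;> simp [h]

end CompAux

theorem primrec_varsL : Primrec varsL := by
  have H : Primrec fun x : List (ℕ × ℕ × Bool) × (ℕ × ℕ × Bool) => [x.2.1, x.2.2.1] :=
    Primrec.list_cons.comp (Primrec.fst.comp Primrec.snd)
      (Primrec.list_cons.comp (Primrec.fst.comp (Primrec.snd.comp Primrec.snd))
        (Primrec.const []))
  exact Primrec.list_flatMap Primrec.id (Primrec.to₂ H)

theorem primrec_foldr_max : Primrec (fun l : List ℕ => l.foldr max 0) := by
  have H : Primrec fun x : List ℕ × (ℕ × ℕ) => max x.2.1 x.2.2 :=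
    Primrec.nat_max.comp (Primrec.fst.comp Primrec.snd) (Primrec.snd.comp Primrec.snd)
  have main := Primrec.list_foldr Primrec.id (Primrec.const 0) (Primrec.to₂ H)
  exact main.of_eq fun l => rfl

theorem primrec_WW : Primrec WW :=
  (Primrec.succ.comp (primrec_foldr_max.comp primrec_varsL)).of_eq fun φ1 => rfl

theorem firstFalse_eq_foldr (l : List Bool) :
    firstFalse l = l.foldr (fun b s => bif b then s + 1 else 0) 0 := by
  induction l with
  | nil => rfl
  | cons b l ih => cases b <;> simp [firstFalse, ih]

theorem primrec_firstFalse : Primrec firstFalse := by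
  have H : Primrec fun x : List Bool × (Bool × ℕ) => bif x.2.1 then x.2.2 + 1 else 0 :=
    Primrec.cond (Primrec.fst.comp Primrec.snd)
      (Primrec.succ.comp (Primrec.snd.comp Primrec.snd)) (Primrec.const 0)
  have main := Primrec.list_foldr Primrec.id (Primrec.const 0) (Primrec.to₂ H)
  exact main.of_eq fun l => (firstFalse_eq_foldr l).symm

set_option maxHeartbeats 1000000 in
theorem primrec_tuples : Primrec₂ tuples := by
  have Hinner : Primrec fun y : ((ℕ × ℕ) × ℕ × List (List ℕ)) × List ℕ =>
      (List.range y.1.1.1).map (fun v => v :: y.2) := by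
    have Hc : Primrec fun z : (((ℕ × ℕ) × ℕ × List (List ℕ)) × List ℕ) × ℕ => z.2 :: z.1.2 :=
      Primrec.list_cons.comp Primrec.snd (Primrec.snd.comp Primrec.fst)
    exact Primrec.list_map
      (Primrec.list_range.comp (Primrec.fst.comp (Primrec.fst.comp Primrec.fst)))
      (Primrec.to₂ Hc)
  have H : Primrec fun x : (ℕ × ℕ) × ℕ × List (List ℕ) =>
      x.2.2.flatMap (fun t => (List.range x.1.1).map (fun v => v :: t)) :=
    Primrec.list_flatMap (Primrec.snd.comp Primrec.snd) (Primrec.to₂ Hinner)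
  have main := Primrec.nat_rec' (Primrec.snd (α := ℕ) (β := ℕ))
    (Primrec.const ([[]] : List (List ℕ))) (Primrec.to₂ H)
  apply main.of_eq
  rintro ⟨B, L⟩
  induction L with
  | zero => rfl
  | succ L ih =>
    show (Nat.rec _ _ L : List (List ℕ)).flatMap _ = tuples B (L + 1)
    rw [ih]
    rfl

set_option maxHeartbeats 1000000 in
theorem primrec_checkEq : Primrec₂ checkEq := by
  have hgetD : Primrec₂ fun (l : List ℕ) (n : ℕ) => l.getD n 0 := Primrec.list_getD 0
  have Hinner : Primrec fun x : (List (ℕ × ℕ × Bool) × List ℕ) × (ℕ × ℕ × Bool) =>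
      ((x.1.2.getD x.2.1 0 == x.1.2.getD x.2.2.1 0) == x.2.2.2) :=
    (Primrec.dom_bool₂ (· == ·)).comp
      (myPrimrec_nat_beq.comp
        (hgetD.comp (Primrec.snd.comp Primrec.fst) (Primrec.fst.comp Primrec.snd))
        (hgetD.comp (Primrec.snd.comp Primrec.fst)
          (Primrec.fst.comp (Primrec.snd.comp Primrec.snd))))
      (Primrec.snd.comp (Primrec.snd.comp Primrec.snd))
  have H : Primrec fun p : List (ℕ × ℕ × Bool) × List ℕ =>
      p.1.all (fun l => ((p.2.getD l.1 0 == p.2.getD l.2.1 0) == l.2.2)) :=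
    myPrimrec_list_all Primrec.fst (Primrec.to₂ Hinner)
  exact H

set_option maxHeartbeats 1000000 in
theorem primrec_GG : Primrec GG := by
  have primB : Primrec fun q : (List (ℕ × ℕ × Bool) × List ℕ × List ℕ) × List ℕ =>
      q.2.foldr min (WW q.1.1) := by
    have H : Primrec fun x : ((List (ℕ × ℕ × Bool) × List ℕ × List ℕ) × List ℕ) × (ℕ × ℕ) =>
        min x.2.1 x.2.2 :=
      Primrec.nat_min.comp (Primrec.fst.comp Primrec.snd) (Primrec.snd.comp Primrec.snd)
    exact Primrec.list_foldr Primrec.snd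
      (primrec_WW.comp (Primrec.fst.comp Primrec.fst)) (Primrec.to₂ H)
  have h1 : Primrec fun q : (List (ℕ × ℕ × Bool) × List ℕ × List ℕ) × List ℕ =>
      q.1.2.1.all fun n => !(q.1.2.2.any fun m => m == n) := by
    have Hbeq : Primrec fun z :
        (((List (ℕ × ℕ × Bool) × List ℕ × List ℕ) × List ℕ) × ℕ) × ℕ => z.2 == z.1.2 :=
      myPrimrec_nat_beq.comp Primrec.snd (Primrec.snd.comp Primrec.fst)
    have Hany : Primrec fun x : ((List (ℕ × ℕ × Bool) × List ℕ × List ℕ) × List ℕ) × ℕ =>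
        x.1.1.2.2.any fun m => m == x.2 :=
      myPrimrec_list_any
        (Primrec.snd.comp (Primrec.snd.comp (Primrec.fst.comp Primrec.fst)))
        (Primrec.to₂ Hbeq)
    exact myPrimrec_list_all (Primrec.fst.comp (Primrec.snd.comp Primrec.fst))
      (Primrec.to₂ ((Primrec.dom_bool Bool.not).comp Hany))
  have h2 : Primrec fun q : (List (ℕ × ℕ × Bool) × List ℕ × List ℕ) × List ℕ =>
      decide (0 < q.2.foldr min (WW q.1.1)) :=
    (Primrec.nat_lt.comp (Primrec.const 0) primB).decide
  have h3 : Primrec fun q : (List (ℕ × ℕ × Bool) × List ℕ × List ℕ) × List ℕ =>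
      (tuples (q.2.foldr min (WW q.1.1)) (WW q.1.1)).any fun t => checkEq q.1.1 t := by
    have Hchk : Primrec fun x :
        ((List (ℕ × ℕ × Bool) × List ℕ × List ℕ) × List ℕ) × List ℕ => checkEq x.1.1.1 x.2 :=
      primrec_checkEq.comp (Primrec.fst.comp (Primrec.fst.comp Primrec.fst)) Primrec.snd
    exact myPrimrec_list_any
      (primrec_tuples.comp primB (primrec_WW.comp (Primrec.fst.comp Primrec.fst)))
      (Primrec.to₂ Hchk)
  exact ((Primrec.dom_bool₂ (· && ·)).comp h1
    ((Primrec.dom_bool₂ (· && ·)).comp h2 h3)).of_eq fun q => rfl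

theorem WW_pos (φ1 : List (ℕ × ℕ × Bool)) : 0 < WW φ1 := Nat.succ_pos _

attribute [irreducible] GG tuples checkEq WW firstFalse varsL

set_option maxHeartbeats 4000000 in
theorem part2_aux (F : ℕ+ → ℕ∞) (f0 : ℕ × ℕ → Bool) (hcomp : Computable f0)
    (hspec : ∀ p : ℕ × ℕ, f0 p = true ↔ ((p.2 + 1 : ℕ) : ℕ∞) ≤ F p.1.succPNat) :
    ∃ d : List (ℕ × ℕ × Bool) × List ℕ × List ℕ → Bool, Computable d ∧
      ∀ q : List (ℕ × ℕ × Bool) × List ℕ × List ℕ,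
        (d q = true ↔ SatTle F q.1 (q.2.1.map Nat.succPNat) (q.2.2.map Nat.succPNat)) := by
  refine ⟨fun q => GG (q, q.2.1.map (fun n =>
    firstFalse ((List.range (WW q.1)).map (fun k => f0 (n, k))))), ?_, ?_⟩
  · have hrow : Computable fun p : (List (ℕ × ℕ × Bool) × List ℕ × List ℕ) × ℕ =>
        (List.range (WW p.1.1)).map (fun k => f0 (p.2, k)) :=
      myComputable_list_map
        ((Primrec.list_range.comp (primrec_WW.comp (Primrec.fst.comp Primrec.fst))).to_comp)
        (Computable.to₂ (hcomp.comp (Computable.pair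
          (Computable.snd.comp Computable.fst) Computable.snd)))
    have hcaps : Computable fun q : List (ℕ × ℕ × Bool) × List ℕ × List ℕ =>
        q.2.1.map (fun n => firstFalse ((List.range (WW q.1)).map (fun k => f0 (n, k)))) :=
      myComputable_list_map (Computable.fst.comp Computable.snd)
        (Computable.to₂ (primrec_firstFalse.to_comp.comp hrow))
    exact primrec_GG.to_comp.comp (Computable.id.pair hcaps)
  · rintro ⟨φ1, Pos, Neg⟩
    refine GG_iff F φ1 Pos Neg _ ?_
    intro n hn
    exact cap_spec (F n.succPNat) (fun k => f0 (n, k)) (fun k => hspec (n, k))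
      (WW φ1) (WW_pos φ1)

/-- If the relation `F(m) ≥ n` is decidable then: a conjunction of literals `φ₁ ∧ φ₂` with
`φ₁` satisfiable with least model size `m` is `T_≤`-satisfiable iff `φ₂` has no
complementary pair and `F(n) ≥ m` for every positive literal `Pₙ`; consequently `T_≤` is
decidable. -/
theorem stmt_14 (F : ℕ+ → ℕ∞)
    (hdec : ComputablePred fun p : ℕ × ℕ => ((p.2 + 1 : ℕ) : ℕ∞) ≤ F p.1.succPNat) :
    (∀ (φ1 : List (ℕ × ℕ × Bool)) (Pos Neg : List ℕ+) (m : ℕ),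
      (∃ (M : Type) (σ : ℕ → M),
        Nonempty M ∧ EqSat φ1 σ ∧ Cardinal.mk M = (m : Cardinal)) →
      (∀ (M : Type) (σ : ℕ → M),
        Nonempty M → EqSat φ1 σ → (m : Cardinal) ≤ Cardinal.mk M) →
      (SatTle F φ1 Pos Neg ↔
        ((∀ n ∈ Pos, n ∉ Neg) ∧ ∀ n ∈ Pos, (m : ℕ∞) ≤ F n))) ∧
    ∃ d : List (ℕ × ℕ × Bool) × List ℕ × List ℕ → Bool, Computable d ∧
      ∀ q : List (ℕ × ℕ × Bool) × List ℕ × List ℕ,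
        (d q = true ↔ SatTle F q.1 (q.2.1.map Nat.succPNat) (q.2.2.map Nat.succPNat)) := by
  constructor
  · intro φ1 Pos Neg m hex hmin
    constructor
    · rintro ⟨M, P, σ, hne, hmod, heq, hpos, hneg⟩
      refine ⟨fun n hn hnNeg => hneg n hnNeg (hpos n hn), ?_⟩
      intro n hn
      cases hF : F n with
      | top => exact le_top
      | coe k =>
        have hMk := hmod n k hF (hpos n hn)
        have hmle : (m : Cardinal) ≤ Cardinal.mk M := hmin M σ hne heq
        have hmk : m ≤ k := by exact_mod_cast le_trans hmle hMk
        exact_mod_cast hmk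
    · rintro ⟨hdisj, hFm⟩
      obtain ⟨M, σ, hne, heq, hcard⟩ := hex
      refine ⟨M, fun n => n ∈ Pos, σ, hne, ?_, heq, fun n hn => hn,
        fun n hn hP => hdisj n hP hn⟩
      intro n k hF hn
      have h1 := hFm n hn
      rw [hF] at h1
      have hmk : m ≤ k := by exact_mod_cast h1
      rw [hcard]
      exact_mod_cast hmk
  · obtain ⟨D, hcomp⟩ := hdec
    exact part2_aux F _ hcomp (fun p => by simp)
end

section
/- Let h : ℕ+ → {0,1} and let T be axiomatized by {P₁ → |domain| = 1} ∪ {P₁ → ¬Pₙ : n ≥ 2} ∪ {Pₙ → |domain| ≥ m : m, n ≥ 2, h(n) = 1}. A conjunction of literals φ = φ₁ ∧ φ₂ (equalities/disequalities φ₁, predicate literals φ₂) is T-satisfiable if and only if: φ₁ is satisfiable in equational logic, φ₂ contains no complementary pair of literals, and if P₁ occurs positively in φ₂ then φ₁ has a one-element model and φ₂ contains no other positive literal. In particular, T-satisfiability of quantifier-free formulas does not depend on h and is decidable. -/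
/-- `(M, P)` is a model of the theory axiomatized by `{P₁ → |domain| = 1}`,
`{P₁ → ¬Pₙ : n ≥ 2}`, and `{Pₙ → |domain| ≥ m : m, n ≥ 2, h(n) = 1}`. -/
def ThModel (h : ℕ+ → Bool) (M : Type) (P : ℕ+ → Prop) : Prop :=
  (P 1 → Cardinal.mk M = 1) ∧
  (∀ n : ℕ+, 2 ≤ n → P 1 → ¬ P n) ∧
  (∀ n : ℕ+, 2 ≤ n → h n = true → P n → ∀ m : ℕ, (m : Cardinal) ≤ Cardinal.mk M)

/-- Satisfiability in the theory of the conjunction of literals `φ₁ ∧ φ₂`, with positive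
predicate literals `Pos` and negative ones `Neg`. -/
def SatTh (h : ℕ+ → Bool) (φ1 : List (ℕ × ℕ × Bool)) (Pos Neg : Finset ℕ+) : Prop :=
  ∃ (M : Type) (P : ℕ+ → Prop) (σ : ℕ → M),
    Nonempty M ∧ ThModel h M P ∧ EqSat φ1 σ ∧ (∀ n ∈ Pos, P n) ∧ (∀ n ∈ Neg, ¬ P n)



abbrev Lit := ℕ × ℕ × Bool



def allB {α : Type} (f : α → Bool) (l : List α) : Bool :=
  l.foldl (fun b x => b && f x) true

def anyB {α : Type} (f : α → Bool) (l : List α) : Bool :=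
  l.foldl (fun b x => b || f x) false

theorem allB_aux {α : Type} (f : α → Bool) (l : List α) (b : Bool) :
    l.foldl (fun b x => b && f x) b = (b && l.all f) := by
  induction l generalizing b with
  | nil => simp [List.foldl]
  | cons a l ih => simp [List.foldl, ih, Bool.and_assoc]

theorem allB_iff {α : Type} (f : α → Bool) (l : List α) :
    allB f l = true ↔ ∀ x ∈ l, f x = true := by
  simp [allB, allB_aux]

theorem anyB_aux {α : Type} (f : α → Bool) (l : List α) (b : Bool) :
    l.foldl (fun b x => b || f x) b = (b || l.any f) := by
  induction l generalizing b with
  | nil => simp [List.foldl]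
  | cons a l ih => simp [List.foldl, ih, Bool.or_assoc]

theorem anyB_iff {α : Type} (f : α → Bool) (l : List α) :
    anyB f l = true ↔ ∃ x ∈ l, f x = true := by
  simp [anyB, anyB_aux]

def stepL (v : List ℕ) (l : Lit) : List ℕ :=
  if l.2.2 then v.map (fun x => if x = v.getD l.1 0 then v.getD l.2.1 0 else x) else v

def boundL (φ : List Lit) : ℕ :=
  (φ.foldl (fun m l => max m (max l.1 l.2.1)) 0) + 1

def finalL (φ : List Lit) : List ℕ := φ.foldl stepL (List.range (boundL φ))

def eqsatB (φ : List Lit) : Bool :=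
  allB (fun l => l.2.2 || !(decide ((finalL φ).getD l.1 0 = (finalL φ).getD l.2.1 0))) φ

theorem stepL_length (v : List ℕ) (l : Lit) : (stepL v l).length = v.length := by
  unfold stepL; split <;> simp

theorem foldl_stepL_length (ls : List Lit) (v : List ℕ) :
    (ls.foldl stepL v).length = v.length := by
  induction ls generalizing v with
  | nil => rfl
  | cons a ls ih => simp [List.foldl, ih, stepL_length]

theorem getD_map (f : ℕ → ℕ) (v : List ℕ) (i : ℕ) (h : i < v.length) :
    (v.map f).getD i 0 = f (v.getD i 0) := by
  simp [List.getD_eq_getElem?_getD, List.getElem?_eq_getElem h, List.getElem?_map]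

theorem boundL_aux (ls : List Lit) (m m' : ℕ) (h : m' ≤ m) :
    m' ≤ ls.foldl (fun m l => max m (max l.1 l.2.1)) m := by
  induction ls generalizing m with
  | nil => exact h
  | cons a ls ih => exact ih _ (le_trans h (le_max_left _ _))

theorem boundL_mem (ls : List Lit) (m : ℕ) :
    ∀ l ∈ ls, max l.1 l.2.1 ≤ ls.foldl (fun m l => max m (max l.1 l.2.1)) m := by
  induction ls generalizing m with
  | nil => simp
  | cons a ls ih =>
    intro l hl
    rcases List.mem_cons.1 hl with h | h
    · subst h
      exact boundL_aux ls _ _ (le_trans (le_max_right _ _) le_rfl)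
    · exact ih _ l h

theorem boundL_lt (φ : List Lit) (l : Lit) (hl : l ∈ φ) :
    l.1 < boundL φ ∧ l.2.1 < boundL φ := by
  have := boundL_mem φ 0 l hl
  unfold boundL
  constructor <;> omega

theorem stepL_pres (v : List ℕ) (l : Lit) {i j : ℕ} (hi : i < v.length) (hj : j < v.length)
    (h : v.getD i 0 = v.getD j 0) : (stepL v l).getD i 0 = (stepL v l).getD j 0 := by
  unfold stepL; split
  · rw [getD_map _ _ _ hi, getD_map _ _ _ hj, h]
  · exact h

theorem foldl_stepL_pres (ls : List Lit) (v : List ℕ) {i j : ℕ} (hi : i < v.length)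
    (hj : j < v.length) (h : v.getD i 0 = v.getD j 0) :
    (ls.foldl stepL v).getD i 0 = (ls.foldl stepL v).getD j 0 := by
  induction ls generalizing v with
  | nil => exact h
  | cons a ls ih =>
    exact ih (stepL v a) (by rwa [stepL_length]) (by rwa [stepL_length]) (stepL_pres v a hi hj h)

theorem stepL_creates (v : List ℕ) (l : Lit) (hb : l.2.2 = true) (hi : l.1 < v.length)
    (hj : l.2.1 < v.length) : (stepL v l).getD l.1 0 = (stepL v l).getD l.2.1 0 := by
  unfold stepL
  rw [hb]
  simp only [if_true]
  rw [getD_map _ _ _ hi, getD_map _ _ _ hj]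
  by_cases h : v.getD l.2.1 0 = v.getD l.1 0 <;> simp [h]

theorem final_eqs (ls : List Lit) (v : List ℕ)
    (hb : ∀ l ∈ ls, l.1 < v.length ∧ l.2.1 < v.length) :
    ∀ l ∈ ls, l.2.2 = true →
      (ls.foldl stepL v).getD l.1 0 = (ls.foldl stepL v).getD l.2.1 0 := by
  induction ls generalizing v with
  | nil => simp
  | cons a ls ih =>
    intro l hl hlb
    rcases List.mem_cons.1 hl with h | h
    · subst h
      have h1 := (hb l (List.mem_cons_self)).1
      have h2 := (hb l (List.mem_cons_self)).2
      exact foldl_stepL_pres ls (stepL v l) (by rwa [stepL_length]) (by rwa [stepL_length])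
        (stepL_creates v l hlb h1 h2)
    · exact ih (stepL v a)
        (fun l' hl' => by rw [stepL_length]; exact hb l' (List.mem_cons_of_mem _ hl')) l h hlb

/-- Invariant for the backward direction. -/
theorem stepL_inv {M : Type} (σ : ℕ → M) (v : List ℕ) (l : Lit)
    (hli : l.1 < v.length) (hlj : l.2.1 < v.length)
    (hσ : l.2.2 = true → σ l.1 = σ l.2.1)
    (H : ∀ i j, i < v.length → j < v.length → v.getD i 0 = v.getD j 0 → σ i = σ j) :
    ∀ i j, i < (stepL v l).length → j < (stepL v l).length →
      (stepL v l).getD i 0 = (stepL v l).getD j 0 → σ i = σ j := by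
  intro i j hi hj h
  rw [stepL_length] at hi hj
  unfold stepL at h
  split at h
  · rename_i hb
    rw [getD_map _ _ _ hi, getD_map _ _ _ hj] at h
    have hs := hσ hb
    by_cases h1 : v.getD i 0 = v.getD l.1 0 <;> by_cases h2 : v.getD j 0 = v.getD l.1 0
    · exact H i j hi hj (h1.trans h2.symm)
    · simp only [h1, h2, if_true, if_false] at h
      exact ((H i l.1 hi hli h1).trans hs).trans (H j l.2.1 hj hlj h.symm).symm
    · simp only [h1, h2, if_true, if_false] at h
      exact (H i l.2.1 hi hlj h).trans (hs.symm.trans (H l.1 j hli hj h2.symm))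
    · simp only [h1, h2, if_false] at h
      exact H i j hi hj h
  · exact H i j hi hj h

theorem foldl_inv {M : Type} (σ : ℕ → M) (ls : List Lit) (v : List ℕ)
    (hbnd : ∀ l ∈ ls, l.1 < v.length ∧ l.2.1 < v.length)
    (hσ : ∀ l ∈ ls, l.2.2 = true → σ l.1 = σ l.2.1)
    (H : ∀ i j, i < v.length → j < v.length → v.getD i 0 = v.getD j 0 → σ i = σ j) :
    ∀ i j, i < (ls.foldl stepL v).length → j < (ls.foldl stepL v).length →
      (ls.foldl stepL v).getD i 0 = (ls.foldl stepL v).getD j 0 → σ i = σ j := by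
  induction ls generalizing v with
  | nil => exact H
  | cons a ls ih =>
    have ha := hbnd a (List.mem_cons_self)
    refine ih (stepL v a)
      (fun l hl => by rw [stepL_length]; exact hbnd l (List.mem_cons_of_mem _ hl))
      (fun l hl => hσ l (List.mem_cons_of_mem _ hl))
      (stepL_inv σ v a ha.1 ha.2 (hσ a (List.mem_cons_self)) H)

theorem eqsatB_correct (φ : List Lit) :
    eqsatB φ = true ↔ ∃ (M : Type) (σ : ℕ → M), Nonempty M ∧ EqSat φ σ := by
  constructor
  · intro hB
    refine ⟨ℕ, fun n => (finalL φ).getD n 0, ⟨0⟩, ?_⟩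
    intro l hl
    rw [eqsatB, allB_iff] at hB
    have := hB l hl
    rcases hb : l.2.2 with _ | _
    · rw [hb] at this
      simp only [Bool.false_or, Bool.not_eq_true', decide_eq_false_iff_not] at this
      simpa [hb] using this
    · simp only [hb, if_true]
      have hbd := boundL_lt φ l hl
      have hlen : (List.range (boundL φ)).length = boundL φ := by simp
      exact final_eqs φ (List.range (boundL φ))
        (fun l' hl' => by rw [hlen]; exact boundL_lt φ l' hl') l hl hb
  · rintro ⟨M, σ, _, hsat⟩
    rw [eqsatB, allB_iff]
    intro l hl
    rcases hb : l.2.2 with _ | _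
    · have hne : σ l.1 ≠ σ l.2.1 := by have := hsat l hl; rwa [hb] at this
      have hlen : (List.range (boundL φ)).length = boundL φ := by simp
      have hbd := boundL_lt φ l hl
      have hfl : (finalL φ).length = boundL φ := by
        rw [finalL, foldl_stepL_length, hlen]
      have hinv := foldl_inv σ φ (List.range (boundL φ))
        (fun l' hl' => by rw [hlen]; exact boundL_lt φ l' hl')
        (fun l' hl' hb' => by have := hsat l' hl'; rwa [hb'] at this)
        (fun i j hi hj h => by
          rw [hlen] at hi hj
          rw [List.getD_eq_getElem?_getD, List.getD_eq_getElem?_getD] at h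
          simp [List.getElem?_range, hi, hj] at h
          exact h ▸ rfl)
      simp only [Bool.false_or, Bool.not_eq_true', decide_eq_false_iff_not]
      intro hc
      exact hne (hinv l.1 l.2.1 (by rw [foldl_stepL_length, hlen]; exact hbd.1)
        (by rw [foldl_stepL_length, hlen]; exact hbd.2) hc)
    · simp [hb]

theorem mk_one_subsingleton {M : Type} (h : Cardinal.mk M = 1) : Subsingleton M := by
  rw [Cardinal.eq_one_iff_unique] at h
  exact h.1

theorem oneB_correct (φ : List Lit) :
    allB (fun l => l.2.2) φ = true ↔
      ∃ (M : Type) (σ : ℕ → M), Nonempty M ∧ Cardinal.mk M = 1 ∧ EqSat φ σ := by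
  rw [allB_iff]
  constructor
  · intro hB
    refine ⟨PUnit, fun _ => PUnit.unit, ⟨PUnit.unit⟩, Cardinal.mk_eq_one PUnit, ?_⟩
    intro l hl
    rw [hB l hl]
    simp
  · rintro ⟨M, σ, _, hcard, hsat⟩ l hl
    have := mk_one_subsingleton hcard
    by_contra hb
    have hb' : l.2.2 = false := by simpa using hb
    have := hsat l hl
    rw [hb'] at this
    simp only [Bool.false_eq_true, if_false] at this
    exact this (Subsingleton.elim _ _)

theorem two_le_of_ne_one (n : ℕ+) (hn : n ≠ 1) : 2 ≤ n := by
  rcases n with ⟨n, hp⟩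
  have h1 : n ≠ 1 := fun e => hn (by subst e; rfl)
  exact (PNat.coe_le_coe 2 ⟨n, hp⟩).1 (by change 2 ≤ n; omega)



theorem satth_iff (h : ℕ+ → Bool) (φ1 : List (ℕ × ℕ × Bool)) (Pos Neg : Finset ℕ+) :
    SatTh h φ1 Pos Neg ↔
      ((∃ (M : Type) (σ : ℕ → M), Nonempty M ∧ EqSat φ1 σ) ∧
        (∀ n ∈ Pos, n ∉ Neg) ∧
        ((1 : ℕ+) ∈ Pos →
          (∃ (M : Type) (σ : ℕ → M),
            Nonempty M ∧ Cardinal.mk M = 1 ∧ EqSat φ1 σ) ∧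
          Pos = {1})) := by
  constructor
  · rintro ⟨M, P, σ, hne, ⟨hm1, hm2, hm3⟩, heq, hpos, hneg⟩
    refine ⟨⟨M, σ, hne, heq⟩, fun n hn hn' => hneg n hn' (hpos n hn), fun h1 => ?_⟩
    have hP1 : P 1 := hpos 1 h1
    constructor
    · exact ⟨M, σ, hne, hm1 hP1, heq⟩
    · ext n
      simp only [Finset.mem_singleton]
      constructor
      · intro hn
        by_contra hne1
        exact hm2 n (two_le_of_ne_one n hne1) hP1 (hpos n hn)
      · rintro rfl; exact h1
  · rintro ⟨⟨M, σ, hne, heq⟩, hdis, hC⟩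
    by_cases h1 : (1 : ℕ+) ∈ Pos
    · obtain ⟨⟨M', σ', hne', hcard', heq'⟩, hPos⟩ := hC h1
      refine ⟨M', fun n => n = 1, σ', hne', ⟨fun _ => hcard', ?_, ?_⟩, heq', ?_, ?_⟩
      · rintro n hn _ rfl
        exact absurd hn (by decide)
      · rintro n hn _ rfl
        exact absurd hn (by decide)
      · intro n hn
        rw [hPos] at hn
        exact Finset.mem_singleton.1 hn
      · rintro n hn rfl
        exact hdis 1 h1 hn
    · refine ⟨M ⊕ ℕ, fun n => n ∈ Pos, fun n => Sum.inl (σ n), ⟨Sum.inr 0⟩,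
        ⟨fun hc => absurd hc h1, fun n _ hc => absurd hc h1, ?_⟩, ?_, fun n hn => hn,
        fun n hn hc => hdis n hc hn⟩
      · intro n _ _ _ m
        exact le_trans (le_of_lt (Cardinal.nat_lt_aleph0 m)) (Cardinal.aleph0_le_mk _)
      · intro l hl
        have := heq l hl
        by_cases hb : l.2.2 = true
        · rw [if_pos hb] at this ⊢
          exact congrArg Sum.inl this
        · rw [if_neg hb] at this ⊢
          exact fun e => this (Sum.inl.inj e)

def disjB (p : List ℕ × List ℕ) : Bool :=
  allB (fun m => !(anyB (fun k => decide (k = m)) p.2)) p.1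

def p1B (q : List Lit × List ℕ) : Bool :=
  !(anyB (fun k => decide (k = 0)) q.2) ||
    (allB (fun l => l.2.2) q.1 && allB (fun m => decide (m = 0)) q.2)

def dfun (q : List Lit × List ℕ × List ℕ) : Bool :=
  eqsatB q.1 && disjB q.2 && p1B (q.1, q.2.1)

theorem anyB_eq_false {α : Type} (f : α → Bool) (l : List α) :
    anyB f l = false ↔ ∀ x ∈ l, f x = false := by
  rw [← Bool.not_eq_true, anyB_iff]
  simp

theorem succPNat_eq_one {m : ℕ} : Nat.succPNat m = 1 ↔ m = 0 := by
  constructor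
  · intro e
    have := congrArg PNat.val e
    simpa using this
  · rintro rfl; rfl

theorem dfun_iff (h : ℕ+ → Bool) (q : List Lit × List ℕ × List ℕ) :
    dfun q = true ↔
      SatTh h q.1 (q.2.1.map Nat.succPNat).toFinset (q.2.2.map Nat.succPNat).toFinset := by
  obtain ⟨φ, pos, neg⟩ := q
  rw [satth_iff]
  simp only [dfun, Bool.and_eq_true]
  have c1 := eqsatB_correct φ
  have c2 : disjB (pos, neg) = true ↔
      (∀ n ∈ (pos.map Nat.succPNat).toFinset, n ∉ (neg.map Nat.succPNat).toFinset) := by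
    simp only [disjB, allB_iff, Bool.not_eq_true', anyB_eq_false, decide_eq_false_iff_not,
      List.mem_toFinset, List.mem_map]
    constructor
    · rintro H n ⟨m, hm, rfl⟩ ⟨k, hk, e⟩
      exact H m hm k hk (Nat.succPNat_inj.1 e)
    · intro H m hm k hk e
      exact H _ ⟨m, hm, rfl⟩ ⟨k, hk, by rw [e]⟩
  have hmem1 : (1 : ℕ+) ∈ (pos.map Nat.succPNat).toFinset ↔ 0 ∈ pos := by
    simp only [List.mem_toFinset, List.mem_map]
    constructor
    · rintro ⟨m, hm, e⟩
      rwa [← succPNat_eq_one.1 e]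
    · intro h0
      exact ⟨0, h0, rfl⟩
  have c3 : p1B (φ, pos) = true ↔
      ((1 : ℕ+) ∈ (pos.map Nat.succPNat).toFinset →
        (∃ (M : Type) (σ : ℕ → M), Nonempty M ∧ Cardinal.mk M = 1 ∧ EqSat φ σ) ∧
          (pos.map Nat.succPNat).toFinset = {1}) := by
    simp only [p1B, Bool.or_eq_true, Bool.not_eq_true', Bool.and_eq_true]
    rw [hmem1]
    constructor
    · rintro (hc | ⟨ha, hb⟩) h0
      · rw [anyB_eq_false] at hc
        exact absurd (hc 0 h0) (by simp)
      · refine ⟨(oneB_correct φ).1 ha, ?_⟩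
        rw [allB_iff] at hb
        ext n
        simp only [Finset.mem_singleton, List.mem_toFinset, List.mem_map]
        constructor
        · rintro ⟨m, hm, rfl⟩
          rw [succPNat_eq_one]
          simpa using hb m hm
        · rintro rfl
          exact ⟨0, h0, rfl⟩
    · intro H
      by_cases h0 : 0 ∈ pos
      · obtain ⟨hone, hsing⟩ := H h0
        refine Or.inr ⟨(oneB_correct φ).2 hone, ?_⟩
        rw [allB_iff]
        intro m hm
        have : Nat.succPNat m ∈ (pos.map Nat.succPNat).toFinset := by
          simp only [List.mem_toFinset, List.mem_map]
          exact ⟨m, hm, rfl⟩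
        rw [hsing, Finset.mem_singleton, succPNat_eq_one] at this
        simpa using this
      · refine Or.inl ?_
        rw [anyB_eq_false]
        intro k hk
        simp only [decide_eq_false_iff_not]
        rintro rfl
        exact h0 hk
  rw [c1, c2, c3]
  tauto

open Primrec in
theorem primrec_boundL : Primrec boundL := by
  have h : Primrec fun (φ : List Lit) =>
      φ.foldl (fun m l => max m (max l.1 l.2.1)) 0 :=
    list_foldl .id (const 0)
      ((nat_max.comp (fst.comp snd)
        (nat_max.comp (fst.comp (snd.comp snd))
          (fst.comp (snd.comp (snd.comp snd))))).to₂)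
  exact (succ.comp h).of_eq fun a => rfl

open Primrec in
theorem primrec_stepL : Primrec₂ stepL := by
  have hc : PrimrecPred fun (p : List ℕ × Lit) => p.2.2.2 = true :=
    Primrec.eq.comp (snd.comp (snd.comp snd)) (const true)
  have hA : Primrec fun (pp : (List ℕ × Lit) × ℕ) => pp.1.1.getD pp.1.2.1 0 :=
    (list_getD 0).comp (fst.comp fst) (fst.comp (snd.comp fst))
  have hB : Primrec fun (pp : (List ℕ × Lit) × ℕ) => pp.1.1.getD pp.1.2.2.1 0 :=
    (list_getD 0).comp (fst.comp fst) (fst.comp (snd.comp (snd.comp fst)))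
  have hf : Primrec fun (p : List ℕ × Lit) =>
      p.1.map (fun x => if x = p.1.getD p.2.1 0 then p.1.getD p.2.2.1 0 else x) :=
    list_map fst ((Primrec.ite (Primrec.eq.comp snd hA) hB snd).to₂)
  exact (Primrec.ite hc hf fst).to₂

open Primrec in
theorem primrec_finalL : Primrec finalL := by
  have := list_foldl (Primrec.id (α := List Lit)) (list_range.comp primrec_boundL)
    ((primrec_stepL.comp (fst.comp snd) (snd.comp snd)).to₂)
  exact this.of_eq fun a => rfl

open Primrec in
theorem primrec_eqsatB : Primrec eqsatB := by
  have hX : Primrec fun (p : List Lit × Bool × Lit) => (finalL p.1).getD p.2.2.1 0 :=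
    (list_getD 0).comp (primrec_finalL.comp fst) (fst.comp (snd.comp snd))
  have hY : Primrec fun (p : List Lit × Bool × Lit) => (finalL p.1).getD p.2.2.2.1 0 :=
    (list_getD 0).comp (primrec_finalL.comp fst) (fst.comp (snd.comp (snd.comp snd)))
  have := list_foldl (Primrec.id (α := List Lit)) (const true)
    ((Primrec.and.comp (fst.comp snd)
      (Primrec.or.comp (snd.comp (snd.comp (snd.comp snd)))
        (Primrec.not.comp (Primrec.eq.comp hX hY).decide))).to₂)
  exact this.of_eq fun a => rfl

open Primrec in
theorem primrec_disjB : Primrec disjB := by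
  have inner : Primrec fun (q : (List ℕ × List ℕ) × Bool × ℕ) =>
      q.1.2.foldl (fun c k => c || decide (k = q.2.2)) false :=
    list_foldl (snd.comp fst) (const false)
      ((Primrec.or.comp (fst.comp snd)
        (Primrec.eq.comp (snd.comp snd) (snd.comp (snd.comp fst))).decide).to₂)
  have := list_foldl (Primrec.fst (α := List ℕ) (β := List ℕ)) (const true)
    ((Primrec.and.comp (fst.comp snd) (Primrec.not.comp inner)).to₂)
  exact this.of_eq fun a => rfl

open Primrec in
theorem primrec_p1B : Primrec p1B := by
  have cA : Primrec fun (q : List Lit × List ℕ) => anyB (fun k => decide (k = 0)) q.2 :=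
    list_foldl snd (const false)
      ((Primrec.or.comp (fst.comp snd) (Primrec.eq.comp (snd.comp snd) (const 0)).decide).to₂)
  have cB : Primrec fun (q : List Lit × List ℕ) => allB (fun (l : Lit) => l.2.2) q.1 :=
    list_foldl fst (const true)
      ((Primrec.and.comp (fst.comp snd) (snd.comp (snd.comp (snd.comp snd)))).to₂)
  have cC : Primrec fun (q : List Lit × List ℕ) => allB (fun m => decide (m = 0)) q.2 :=
    list_foldl snd (const true)
      ((Primrec.and.comp (fst.comp snd) (Primrec.eq.comp (snd.comp snd) (const 0)).decide).to₂)
  exact Primrec.or.comp (Primrec.not.comp cA) (Primrec.and.comp cB cC)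

open Primrec in
theorem primrec_dfun : Primrec dfun :=
  Primrec.and.comp
    (Primrec.and.comp (primrec_eqsatB.comp fst) (primrec_disjB.comp snd))
    (primrec_p1B.comp (Primrec.pair fst (fst.comp snd)))

theorem computable_dfun : Computable dfun := primrec_dfun.to_comp

/-- A conjunction of literals is satisfiable in the theory iff `φ₁` is satisfiable in
equational logic, `φ₂` has no complementary pair, and if `P₁` occurs positively then `φ₁`
has a one-element model and `P₁` is the only positive literal. In particular
satisfiability does not depend on `h` and is decidable. -/
theorem stmt_19 (h : ℕ+ → Bool) :
    (∀ (φ1 : List (ℕ × ℕ × Bool)) (Pos Neg : Finset ℕ+),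
      SatTh h φ1 Pos Neg ↔
        ((∃ (M : Type) (σ : ℕ → M), Nonempty M ∧ EqSat φ1 σ) ∧
          (∀ n ∈ Pos, n ∉ Neg) ∧
          ((1 : ℕ+) ∈ Pos →
            (∃ (M : Type) (σ : ℕ → M),
              Nonempty M ∧ Cardinal.mk M = 1 ∧ EqSat φ1 σ) ∧
            Pos = {1}))) ∧
    (∀ (h' : ℕ+ → Bool) (φ1 : List (ℕ × ℕ × Bool)) (Pos Neg : Finset ℕ+),
      SatTh h φ1 Pos Neg ↔ SatTh h' φ1 Pos Neg) ∧
    (∃ d : List (ℕ × ℕ × Bool) × List ℕ × List ℕ → Bool, Computable d ∧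
      ∀ q : List (ℕ × ℕ × Bool) × List ℕ × List ℕ,
        (d q = true ↔
          SatTh h q.1 (q.2.1.map Nat.succPNat).toFinset (q.2.2.map Nat.succPNat).toFinset)) := by
  refine ⟨fun φ1 Pos Neg => satth_iff h φ1 Pos Neg,
    fun h' φ1 Pos Neg => (satth_iff h φ1 Pos Neg).trans (satth_iff h' φ1 Pos Neg).symm,
    ⟨dfun, computable_dfun, fun q => dfun_iff h q⟩⟩
end
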